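/- arXiv:1608.00357 — 2 statements merged into one kernel-verified Lean document; each statement's English description precedes it below -/
import Mathlib

section
/- With Ψ_q as above: for every x ∈ {0,1}^ℕ and every j ∈ ℤ, Ψ_q(x)_{pj} = Ψ_q(σ(x))_j, where σ(x)_n = x_{n+1} is the one-sided shift. In other words, the map Ω_0 defined by (Ω_0(y))_j = y_{pj} satisfies Ω_0(Ψ_q(x)) = Ψ_q(σ(x)). -/
open Classical in
/-- `Ψ_q(x)_j = x_n` if `j ≡ q·pⁿ (mod pⁿ⁺¹)` for some (unique) `n`, and `$` (= `none`)
otherwise. -/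
noncomputable def Psi (p q : ℕ) (x : ℕ → Bool) : ℤ → Option Bool :=
  fun j =>
    if h : ∃ n : ℕ, j ≡ (q : ℤ) * (p : ℤ) ^ n [ZMOD (p : ℤ) ^ (n + 1)]
    then some (x h.choose) else none

lemma not_p_dvd_q (p q : ℕ) (hp : 3 ≤ p) (hq1 : 1 ≤ q) (hq2 : q ≤ p - 1) :
    ¬ ((p : ℤ) ∣ (q : ℤ)) := by
  intro h
  have h' : p ∣ q := by exact_mod_cast h
  have := Nat.le_of_dvd (by omega) h'
  omega

lemma psi_uniq (p q : ℕ) (hp : 3 ≤ p) (hq1 : 1 ≤ q) (hq2 : q ≤ p - 1) (j : ℤ)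
    {m n : ℕ} (hm : j ≡ (q : ℤ) * (p : ℤ) ^ m [ZMOD (p : ℤ) ^ (m + 1)])
    (hn : j ≡ (q : ℤ) * (p : ℤ) ^ n [ZMOD (p : ℤ) ^ (n + 1)]) : m = n := by
  have key : ∀ {a b : ℕ}, a < b →
      j ≡ (q : ℤ) * (p : ℤ) ^ a [ZMOD (p : ℤ) ^ (a + 1)] →
      j ≡ (q : ℤ) * (p : ℤ) ^ b [ZMOD (p : ℤ) ^ (b + 1)] → False := by
    intro a b hab ha hb
    have hdvd : ((p : ℤ) ^ (a + 1)) ∣ ((p : ℤ) ^ (b + 1)) := pow_dvd_pow _ (by omega)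
    have h2 : (q : ℤ) * (p : ℤ) ^ a ≡ (q : ℤ) * (p : ℤ) ^ b [ZMOD (p : ℤ) ^ (a + 1)] :=
      ha.symm.trans (hb.of_dvd hdvd)
    have h3 : ((p : ℤ) ^ (a + 1)) ∣ (q : ℤ) * (p : ℤ) ^ b - (q : ℤ) * (p : ℤ) ^ a :=
      Int.ModEq.dvd h2
    have h4 : ((p : ℤ) ^ (a + 1)) ∣ (q : ℤ) * (p : ℤ) ^ b := by
      have : (q : ℤ) * (p : ℤ) ^ b = (q : ℤ) * (p : ℤ) ^ (b - (a + 1)) * (p : ℤ) ^ (a + 1) := by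
        rw [mul_assoc, ← pow_add]
        congr 2
        omega
      rw [this]
      exact dvd_mul_left _ _
    have h5 : ((p : ℤ) ^ (a + 1)) ∣ (q : ℤ) * (p : ℤ) ^ a := by
      have := dvd_sub h4 h3
      simpa using this
    have hpm : ((p : ℤ) ^ a) ≠ 0 := pow_ne_zero _ (by positivity)
    have h6 : (p : ℤ) ∣ (q : ℤ) := by
      rw [pow_succ, mul_comm ((p : ℤ) ^ a) (p : ℤ), mul_comm ((q : ℤ)) ((p : ℤ) ^ a),
        mul_comm ((p : ℤ)) ((p : ℤ) ^ a)] at h5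
      exact (mul_dvd_mul_iff_left hpm).mp h5
    exact not_p_dvd_q p q hp hq1 hq2 h6
  rcases lt_trichotomy m n with h | h | h
  · exact absurd (key h hm hn) (by simp)
  · exact h
  · exact absurd (key h hn hm) (by simp)

lemma psi_cancel (p q : ℕ) (hp : 3 ≤ p) (j : ℤ) (m : ℕ) :
    ((p : ℤ) * j ≡ (q : ℤ) * (p : ℤ) ^ (m + 1) [ZMOD (p : ℤ) ^ (m + 1 + 1)]) ↔
      (j ≡ (q : ℤ) * (p : ℤ) ^ m [ZMOD (p : ℤ) ^ (m + 1)]) := by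
  have hp0 : (p : ℤ) ≠ 0 := by positivity
  rw [Int.modEq_iff_dvd, Int.modEq_iff_dvd]
  have heq : (q : ℤ) * (p : ℤ) ^ (m + 1) - (p : ℤ) * j
      = (p : ℤ) * ((q : ℤ) * (p : ℤ) ^ m - j) := by ring
  have hpow : ((p : ℤ) ^ (m + 1 + 1)) = (p : ℤ) * (p : ℤ) ^ (m + 1) := by ring
  rw [heq, hpow, mul_dvd_mul_iff_left hp0]

/-- `Ψ_q(x)_{pj} = Ψ_q(σ(x))_j` where `σ` is the one-sided shift;
equivalently `Ω_0(Ψ_q(x)) = Ψ_q(σ(x))` where `(Ω_0 y)_j = y_{pj}`. -/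
theorem stmt_7 (p q : ℕ) (hp : 3 ≤ p) (hq1 : 1 ≤ q) (hq2 : q ≤ p - 1)
    (x : ℕ → Bool) (j : ℤ) :
    Psi p q x ((p : ℤ) * j) = Psi p q (fun n => x (n + 1)) j := by
  classical
  have hp0 : (p : ℤ) ≠ 0 := by positivity
  -- n = 0 is impossible for p*j
  have hne0 : ¬ ((p : ℤ) * j ≡ (q : ℤ) * (p : ℤ) ^ 0 [ZMOD (p : ℤ) ^ (0 + 1)]) := by
    intro h
    have h' : ((p : ℤ) ^ (0 + 1)) ∣ (q : ℤ) * (p : ℤ) ^ 0 - (p : ℤ) * j :=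
      Int.modEq_iff_dvd.mp h
    norm_num at h'
    have : (p : ℤ) ∣ (q : ℤ) := by
      have h2 : (p : ℤ) ∣ (p : ℤ) * j := Dvd.intro _ rfl
      have := dvd_add h' h2
      simpa using this
    exact not_p_dvd_q p q hp hq1 hq2 this
  have hiff : (∃ n : ℕ, (p : ℤ) * j ≡ (q : ℤ) * (p : ℤ) ^ n [ZMOD (p : ℤ) ^ (n + 1)]) ↔
      (∃ n : ℕ, j ≡ (q : ℤ) * (p : ℤ) ^ n [ZMOD (p : ℤ) ^ (n + 1)]) := by
    constructor
    · rintro ⟨n, hn⟩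
      cases n with
      | zero => exact absurd hn hne0
      | succ m => exact ⟨m, (psi_cancel p q hp j m).mp hn⟩
    · rintro ⟨m, hm⟩
      exact ⟨m + 1, (psi_cancel p q hp j m).mpr hm⟩
  unfold Psi
  by_cases h1 : ∃ n : ℕ, (p : ℤ) * j ≡ (q : ℤ) * (p : ℤ) ^ n [ZMOD (p : ℤ) ^ (n + 1)]
  · have h2 : ∃ n : ℕ, j ≡ (q : ℤ) * (p : ℤ) ^ n [ZMOD (p : ℤ) ^ (n + 1)] := hiff.mp h1
    rw [dif_pos h1, dif_pos h2]
    have hc2 := h2.choose_spec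
    have hc1 := h1.choose_spec
    have hc2' : (p : ℤ) * j ≡ (q : ℤ) * (p : ℤ) ^ (h2.choose + 1)
        [ZMOD (p : ℤ) ^ (h2.choose + 1 + 1)] := (psi_cancel p q hp j h2.choose).mpr hc2
    have : h1.choose = h2.choose + 1 := psi_uniq p q hp hq1 hq2 _ hc1 hc2'
    rw [this]
  · have h2 : ¬ ∃ n : ℕ, j ≡ (q : ℤ) * (p : ℤ) ^ n [ZMOD (p : ℤ) ^ (n + 1)] :=
      fun h => h1 (hiff.mpr h)
    rw [dif_neg h1, dif_neg h2]
end

section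
/- If x, x' ∈ {0,1}^ℕ with x ≠ x', then the closures of the shift-orbits of Ψ_q(x) and Ψ_q(x') in {0,1,$}^ℤ are disjoint (p ≥ 3, 1 ≤ q ≤ p−1). -/
/-- The three-symbol alphabet `{0,1,$}` carries the discrete topology. -/
instance : TopologicalSpace (Option Bool) := ⊥

instance : DiscreteTopology (Option Bool) := ⟨rfl⟩

/- ### Auxiliary lemmas -/

private lemma aux_dvd_cancel {P : ℤ} (hP : P ≠ 0) {e : ℕ} {z : ℤ}
    (h : P ^ (e + 1) ∣ z * P ^ e) : P ∣ z := by
  rw [pow_succ, mul_comm (P ^ e) P] at h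
  exact (mul_dvd_mul_iff_right (pow_ne_zero e hP)).mp h

private lemma modEq_of_dvd_sub {n a b : ℤ} (h : n ∣ a - b) : a ≡ b [ZMOD n] :=
  Int.modEq_iff_dvd.mpr (by rw [show b - a = -(a - b) by ring]; exact dvd_neg.mpr h)

private lemma emod_sub_self_dvd (a n : ℤ) : n ∣ a % n - a :=
  ⟨-(a / n), by rw [Int.emod_def]; ring⟩

private lemma self_sub_emod_dvd (a n : ℤ) : n ∣ a - a % n :=
  ⟨a / n, by rw [Int.emod_def]; ring⟩

/-- Uniqueness of the level `n` in the definition of `Psi`. -/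
private lemma psi_level_unique {p q : ℕ} (hp0 : (0:ℤ) < (p:ℤ)) (hq : ¬ (p:ℤ) ∣ (q:ℤ))
    {j : ℤ} {n k : ℕ}
    (hn : j ≡ (q : ℤ) * (p : ℤ) ^ n [ZMOD (p : ℤ) ^ (n + 1)])
    (hk : j ≡ (q : ℤ) * (p : ℤ) ^ k [ZMOD (p : ℤ) ^ (k + 1)]) : n = k := by
  have key : ∀ n k : ℕ, n < k →
      j ≡ (q : ℤ) * (p : ℤ) ^ n [ZMOD (p : ℤ) ^ (n + 1)] →
      j ≡ (q : ℤ) * (p : ℤ) ^ k [ZMOD (p : ℤ) ^ (k + 1)] → False := by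
    intro n k hnk h1 h2
    have h2' : j ≡ (q : ℤ) * (p : ℤ) ^ k [ZMOD (p : ℤ) ^ (n + 1)] :=
      h2.of_dvd (pow_dvd_pow _ (by omega))
    have h3 : ((p:ℤ)) ^ (n + 1) ∣ (q : ℤ) * (p : ℤ) ^ k - (q : ℤ) * (p : ℤ) ^ n :=
      (h1.symm.trans h2').dvd
    have h4 : ((p:ℤ)) ^ (n + 1) ∣ (q : ℤ) * (p : ℤ) ^ k :=
      Dvd.dvd.mul_left (pow_dvd_pow _ (by omega)) _
    have h5 : ((p:ℤ)) ^ (n + 1) ∣ (q : ℤ) * (p : ℤ) ^ n := by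
      have := dvd_sub h4 h3
      rwa [show (q : ℤ) * (p : ℤ) ^ k - ((q : ℤ) * (p : ℤ) ^ k - (q : ℤ) * (p : ℤ) ^ n)
          = (q : ℤ) * (p : ℤ) ^ n by ring] at this
    exact hq (aux_dvd_cancel (ne_of_gt hp0) h5)
  rcases Nat.lt_trichotomy n k with h | h | h
  · exact absurd (key n k h hn hk) (by simp)
  · exact h
  · exact absurd (key k n h hk hn) (by simp)

private lemma Psi_eq_some {p q : ℕ} (hp0 : (0:ℤ) < (p:ℤ)) (hq : ¬ (p:ℤ) ∣ (q:ℤ))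
    (x : ℕ → Bool) {j : ℤ} {n : ℕ}
    (h : j ≡ (q : ℤ) * (p : ℤ) ^ n [ZMOD (p : ℤ) ^ (n + 1)]) :
    Psi p q x j = some (x n) := by
  have hex : ∃ k : ℕ, j ≡ (q : ℤ) * (p : ℤ) ^ k [ZMOD (p : ℤ) ^ (k + 1)] := ⟨n, h⟩
  simp only [Psi, dif_pos hex]
  exact congrArg (fun k => some (x k)) (psi_level_unique hp0 hq hex.choose_spec h)

private lemma Psi_eq_none {p q : ℕ} (x : ℕ → Bool) {j : ℤ}
    (h : ∀ n : ℕ, ¬ j ≡ (q : ℤ) * (p : ℤ) ^ n [ZMOD (p : ℤ) ^ (n + 1)]) :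
    Psi p q x j = none := by
  simp only [Psi, dif_neg (not_exists.mpr h)]

/-- Core combinatorial lemma: any shift of `Ψ_q(x')` fails the window test for `x`. -/
private lemma core_lemma (p q : ℕ) (hp : 3 ≤ p) (hq1 : 1 ≤ q) (hq2 : q ≤ p - 1)
    (x x' : ℕ → Bool) (N : ℕ) (hxN : x N ≠ x' N) (m r : ℤ) :
    ∃ n ≤ N, ∃ j : ℤ, 0 ≤ j ∧ j < (p:ℤ) ^ (N + 2) ∧
      (p:ℤ) ^ (n + 1) ∣ j - ((q:ℤ) * (p:ℤ) ^ n - r) ∧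
      Psi p q x' (j + m) ≠ some (x n) := by
  have hp0 : (0:ℤ) < (p:ℤ) := by exact_mod_cast (by omega : 0 < p)
  have hp1 : (1:ℤ) ≤ (p:ℤ) := hp0
  have hq : ¬ (p:ℤ) ∣ (q:ℤ) := by
    rw [Int.natCast_dvd_natCast]
    intro h
    have := Nat.le_of_dvd (by omega) h
    omega
  set P : ℤ := (p:ℤ) with hPdef
  have hp3 : (3:ℤ) ≤ P := by rw [hPdef]; exact_mod_cast hp
  have hqp : (q:ℤ) + 1 ≤ P := by rw [hPdef]; exact_mod_cast (show q + 1 ≤ p by omega)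
  by_cases hA : P ^ (N + 1) ∣ (r - m)
  · -- Case A : phases agree up to level N; the level-N symbol of x' shows up
    refine ⟨N, le_refl N, ((q:ℤ) * P ^ N - r) % P ^ (N + 1),
      Int.emod_nonneg _ (by positivity), ?_, ?_, ?_⟩
    · calc ((q:ℤ) * P ^ N - r) % P ^ (N + 1) < P ^ (N + 1) :=
            Int.emod_lt_of_pos _ (by positivity)
        _ ≤ P ^ (N + 2) := pow_le_pow_right₀ hp1 (by omega)
    · exact emod_sub_self_dvd _ _
    · have h1 : P ^ (N + 1) ∣ (((q:ℤ) * P ^ N - r) % P ^ (N + 1) + m) - (q:ℤ) * P ^ N := by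
        have := dvd_sub (emod_sub_self_dvd ((q:ℤ) * P ^ N - r) (P ^ (N + 1))) hA
        rwa [show ((q:ℤ) * P ^ N - r) % P ^ (N + 1) - ((q:ℤ) * P ^ N - r) - (r - m)
            = (((q:ℤ) * P ^ N - r) % P ^ (N + 1) + m) - (q:ℤ) * P ^ N
            from by ring] at this
      rw [Psi_eq_some hp0 hq x' (modEq_of_dvd_sub h1)]
      intro hcontr
      exact hxN (Option.some.inj hcontr).symm
  · -- Case B : phases differ; find the first level of disagreement
    have hex : ∃ n : ℕ, ¬ P ^ (n + 1) ∣ (r - m) := ⟨N, hA⟩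
    set n := Nat.find hex with hndef
    have hnN : n ≤ N := Nat.find_min' hex hA
    have hn1 : ¬ P ^ (n + 1) ∣ (r - m) := Nat.find_spec hex
    have hn0 : P ^ n ∣ (r - m) := by
      rcases Nat.eq_zero_or_pos n with h0 | h0
      · rw [h0]; simp only [pow_zero]; exact one_dvd (r - m)
      · have h1 := Nat.find_min hex (show n - 1 < n by omega)
        rw [not_not] at h1
        have h2 : n - 1 + 1 = n := by omega
        rwa [h2] at h1
    obtain ⟨t, ht⟩ := hn0
    have hpt : ¬ P ∣ t := by
      intro h
      exact hn1 (by rw [ht, pow_succ]; exact mul_dvd_mul_left _ h)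
    by_cases hB : P ∣ (q:ℤ) - t
    · -- Case B2 : level-n positions land on deep support of x'; force a `$`
      -- choose the digit d ∈ {1,2}, d ≠ q
      set d : ℤ := if q = 1 then 2 else 1 with hddef
      have hd : 1 ≤ d ∧ d ≤ 2 ∧ (q:ℤ) ≠ d := by
        by_cases h : q = 1 <;> simp only [hddef, h, if_true, if_false] <;> omega
      have hd0 : ¬ P ∣ d := by
        intro h
        have := Int.le_of_dvd (by omega) h
        omega
      have hdq : ¬ P ∣ (q:ℤ) - d := by
        intro h
        have habs := Int.eq_zero_of_abs_lt_dvd h (by rw [abs_lt]; omega)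
        omega
      -- b : the (n+1)-st digit offset
      have haa : P ^ (n + 1) ∣ (q:ℤ) * P ^ n - (r - m) := by
        rw [ht, pow_succ, mul_comm (P ^ n) P,
          show (q:ℤ) * P ^ n - P ^ n * t = ((q:ℤ) - t) * P ^ n by ring]
        exact mul_dvd_mul_right hB _
      obtain ⟨b, hb⟩ := haa
      set A : ℤ := (q:ℤ) * P ^ n - r + (d - b) * P ^ (n + 1) with hAdef
      refine ⟨n, hnN, A % P ^ (n + 2), Int.emod_nonneg _ (by positivity), ?_, ?_, ?_⟩
      · calc A % P ^ (n + 2) < P ^ (n + 2) := Int.emod_lt_of_pos _ (by positivity)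
          _ ≤ P ^ (N + 2) := pow_le_pow_right₀ hp1 (by omega)
      · -- P^(n+1) ∣ j - (q P^n - r)
        have h1 : P ^ (n + 1) ∣ A % P ^ (n + 2) - A :=
          dvd_trans (pow_dvd_pow _ (by omega)) (emod_sub_self_dvd _ _)
        have := dvd_add h1 (dvd_mul_left (P ^ (n + 1)) (d - b))
        rwa [show A % P ^ (n + 2) - A + (d - b) * P ^ (n + 1)
            = A % P ^ (n + 2) - ((q:ℤ) * P ^ n - r) from by rw [hAdef]; ring] at this
      · -- the symbol there is `$`
        have hjm : P ^ (n + 2) ∣ (A % P ^ (n + 2) + m) - d * P ^ (n + 1) := by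
          have h1 : P ^ (n + 2) ∣ A % P ^ (n + 2) - A := emod_sub_self_dvd _ _
          rwa [show A % P ^ (n + 2) - A = (A % P ^ (n + 2) + m) - d * P ^ (n + 1)
              from by rw [hAdef]; linear_combination -hb] at h1
        rw [Psi_eq_none]
        · simp
        intro k hk
        have hkd : P ^ (k + 1) ∣ (q:ℤ) * P ^ k - (A % P ^ (n + 2) + m) :=
          Int.modEq_iff_dvd.mp hk
        rcases Nat.lt_trichotomy k (n + 1) with hlt | heq | hgt
        · -- k ≤ n : j + m ≡ 0 mod P^(k+1), so P ∣ q
          have h2 : P ^ (k + 1) ∣ (A % P ^ (n + 2) + m) := by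
            have hdvd1 : P ^ (k + 1) ∣ (A % P ^ (n + 2) + m) - d * P ^ (n + 1) :=
              dvd_trans (pow_dvd_pow _ (by omega)) hjm
            have hdvd2 : P ^ (k + 1) ∣ d * P ^ (n + 1) :=
              Dvd.dvd.mul_left (pow_dvd_pow _ (by omega)) _
            have := dvd_add hdvd1 hdvd2
            rwa [sub_add_cancel] at this
          have h3 : P ^ (k + 1) ∣ (q:ℤ) * P ^ k := by
            have := dvd_add hkd h2
            rwa [sub_add_cancel] at this
          exact hq (aux_dvd_cancel (ne_of_gt hp0) h3)
        · -- k = n + 1 : would force q ≡ d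
          subst heq
          have h3 : P ^ (n + 2) ∣ ((q:ℤ) - d) * P ^ (n + 1) := by
            have := dvd_add (show P ^ (n + 2) ∣ (q:ℤ) * P ^ (n+1) - (A % P ^ (n + 2) + m)
              from by exact_mod_cast hkd) hjm
            rwa [show (q:ℤ) * P ^ (n+1) - (A % P ^ (n + 2) + m)
                + ((A % P ^ (n + 2) + m) - d * P ^ (n + 1))
                = ((q:ℤ) - d) * P ^ (n + 1) from by ring] at this
          exact hdq (aux_dvd_cancel (ne_of_gt hp0) h3)
        · -- k ≥ n + 2 : would force P ∣ d
          have h2 : P ^ (n + 2) ∣ (A % P ^ (n + 2) + m) := by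
            have hdvd1 : P ^ (n + 2) ∣ (q:ℤ) * P ^ k - (A % P ^ (n + 2) + m) :=
              dvd_trans (pow_dvd_pow _ (by omega)) hkd
            have hdvd2 : P ^ (n + 2) ∣ (q:ℤ) * P ^ k :=
              Dvd.dvd.mul_left (pow_dvd_pow _ (by omega)) _
            have := dvd_sub hdvd2 hdvd1
            rwa [show (q:ℤ) * P ^ k - ((q:ℤ) * P ^ k - (A % P ^ (n + 2) + m))
                = (A % P ^ (n + 2) + m) from by ring] at this
          have h3 : P ^ (n + 2) ∣ d * P ^ (n + 1) := by
            have := dvd_sub h2 hjm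
            rwa [show (A % P ^ (n + 2) + m) - ((A % P ^ (n + 2) + m) - d * P ^ (n + 1))
                = d * P ^ (n + 1) from by ring] at this
          exact hd0 (aux_dvd_cancel (ne_of_gt hp0) h3)
    · -- Case B1 : level-n positions fall outside the support of Ψ(x'); get a `$`
      set A : ℤ := (q:ℤ) * P ^ n - r with hAdef
      refine ⟨n, hnN, A % P ^ (n + 1), Int.emod_nonneg _ (by positivity), ?_, ?_, ?_⟩
      · calc A % P ^ (n + 1) < P ^ (n + 1) := Int.emod_lt_of_pos _ (by positivity)
          _ ≤ P ^ (N + 2) := pow_le_pow_right₀ hp1 (by omega)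
      · exact emod_sub_self_dvd _ _
      · have hjm : P ^ (n + 1) ∣ (A % P ^ (n + 1) + m) - ((q:ℤ) - t) * P ^ n := by
          have h1 : P ^ (n + 1) ∣ A % P ^ (n + 1) - A := emod_sub_self_dvd _ _
          rwa [show A % P ^ (n + 1) - A = (A % P ^ (n + 1) + m) - ((q:ℤ) - t) * P ^ n
              from by rw [hAdef]; linear_combination ht] at h1
        rw [Psi_eq_none]
        · simp
        intro k hk
        have hkd : P ^ (k + 1) ∣ (q:ℤ) * P ^ k - (A % P ^ (n + 1) + m) :=
          Int.modEq_iff_dvd.mp hk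
        rcases Nat.lt_trichotomy k n with hlt | heq | hgt
        · -- k < n
          have h2 : P ^ (k + 1) ∣ (A % P ^ (n + 1) + m) := by
            have hdvd1 : P ^ (k + 1) ∣ (A % P ^ (n + 1) + m) - ((q:ℤ) - t) * P ^ n :=
              dvd_trans (pow_dvd_pow _ (by omega)) hjm
            have hdvd2 : P ^ (k + 1) ∣ ((q:ℤ) - t) * P ^ n :=
              Dvd.dvd.mul_left (pow_dvd_pow _ (by omega)) _
            have := dvd_add hdvd1 hdvd2
            rwa [sub_add_cancel] at this
          have h3 : P ^ (k + 1) ∣ (q:ℤ) * P ^ k := by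
            have := dvd_add hkd h2
            rwa [sub_add_cancel] at this
          exact hq (aux_dvd_cancel (ne_of_gt hp0) h3)
        · -- k = n : would force P ∣ t
          subst heq
          have h3 : P ^ (n + 1) ∣ t * P ^ n := by
            have := dvd_add hkd hjm
            rwa [show (q:ℤ) * P ^ n - (A % P ^ (n + 1) + m)
                + ((A % P ^ (n + 1) + m) - ((q:ℤ) - t) * P ^ n)
                = t * P ^ n from by ring] at this
          exact hpt (aux_dvd_cancel (ne_of_gt hp0) h3)
        · -- k > n : would force P ∣ q - t
          have h2 : P ^ (n + 1) ∣ (A % P ^ (n + 1) + m) := by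
            have hdvd1 : P ^ (n + 1) ∣ (q:ℤ) * P ^ k - (A % P ^ (n + 1) + m) :=
              dvd_trans (pow_dvd_pow _ (by omega)) hkd
            have hdvd2 : P ^ (n + 1) ∣ (q:ℤ) * P ^ k :=
              Dvd.dvd.mul_left (pow_dvd_pow _ (by omega)) _
            have := dvd_sub hdvd2 hdvd1
            rwa [show (q:ℤ) * P ^ k - ((q:ℤ) * P ^ k - (A % P ^ (n + 1) + m))
                = (A % P ^ (n + 1) + m) from by ring] at this
          have h3 : P ^ (n + 1) ∣ ((q:ℤ) - t) * P ^ n := by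
            have := dvd_sub h2 hjm
            rwa [show (A % P ^ (n + 1) + m) - ((A % P ^ (n + 1) + m) - ((q:ℤ) - t) * P ^ n)
                = ((q:ℤ) - t) * P ^ n from by ring] at this
          exact hB (aux_dvd_cancel (ne_of_gt hp0) h3)

/-- If `x ≠ x'`, the closures of the shift-orbits of `Ψ_q(x)` and
`Ψ_q(x')` in `{0,1,$}^ℤ` (product topology) are disjoint. -/
theorem stmt_11 (p q : ℕ) (hp : 3 ≤ p) (hq1 : 1 ≤ q) (hq2 : q ≤ p - 1)
    (x x' : ℕ → Bool) (hxx' : x ≠ x') :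
    Disjoint
      (closure {y : ℤ → Option Bool | ∃ m : ℤ, y = fun j => Psi p q x (j + m)})
      (closure {y : ℤ → Option Bool | ∃ m : ℤ, y = fun j => Psi p q x' (j + m)}) := by
  have hp0 : (0:ℤ) < (p:ℤ) := by exact_mod_cast (by omega : 0 < p)
  have hq : ¬ (p:ℤ) ∣ (q:ℤ) := by
    rw [Int.natCast_dvd_natCast]
    intro h
    have := Nat.le_of_dvd (by omega) h
    omega
  obtain ⟨N, hxN⟩ : ∃ N, x N ≠ x' N := by
    by_contra h
    push_neg at h
    exact hxx' (funext h)
  -- the clopen separating set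
  set U : Set (ℤ → Option Bool) :=
    ⋃ r ∈ Finset.range (p ^ (N + 1)), ⋂ n ∈ Finset.range (N + 1),
      ⋂ j ∈ Finset.Ico (0:ℤ) ((p:ℤ) ^ (N + 2)),
        {y : ℤ → Option Bool |
          (p:ℤ) ^ (n + 1) ∣ j - ((q:ℤ) * (p:ℤ) ^ n - (r:ℤ)) → y j = some (x n)} with hUdef
  have hclopen : IsClopen U := by
    apply isClopen_biUnion_finset
    intro r _
    apply isClopen_biInter_finset
    intro n _
    apply isClopen_biInter_finset
    intro j _
    exact (isClopen_discrete {z : Option Bool |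
      (p:ℤ) ^ (n + 1) ∣ j - ((q:ℤ) * (p:ℤ) ^ n - (r:ℤ)) → z = some (x n)}).preimage
      (continuous_apply j)
  -- the orbit of Ψ(x) is inside U
  have hAU : {y : ℤ → Option Bool | ∃ m : ℤ, y = fun j => Psi p q x (j + m)} ⊆ U := by
    rintro y ⟨m, rfl⟩
    rw [hUdef]
    simp only [Set.mem_iUnion, Set.mem_iInter, Finset.mem_range, Finset.mem_Ico,
      Set.mem_setOf_eq]
    refine ⟨(m % (p:ℤ) ^ (N + 1)).toNat, ?_, ?_⟩
    · have h1 : m % (p:ℤ) ^ (N + 1) < (p:ℤ) ^ (N + 1) :=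
        Int.emod_lt_of_pos _ (by positivity)
      have h2 : ((m % (p:ℤ) ^ (N + 1)).toNat : ℤ) = m % (p:ℤ) ^ (N + 1) :=
        Int.toNat_of_nonneg (Int.emod_nonneg _ (by positivity))
      have h3 : (((p:ℕ) ^ (N + 1) : ℕ) : ℤ) = (p:ℤ) ^ (N + 1) := by push_cast; ring
      rw [← Nat.cast_lt (α := ℤ), h2, h3]
      exact h1
    · intro n hn j hj hdvd
      have h2 : ((m % (p:ℤ) ^ (N + 1)).toNat : ℤ) = m % (p:ℤ) ^ (N + 1) :=
        Int.toNat_of_nonneg (Int.emod_nonneg _ (by positivity))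
      have hmr : (p:ℤ) ^ (n + 1) ∣ m - ((m % (p:ℤ) ^ (N + 1)).toNat : ℤ) := by
        rw [h2]
        exact dvd_trans (pow_dvd_pow _ (by omega)) (self_sub_emod_dvd m _)
      have hfinal : (p:ℤ) ^ (n + 1) ∣ (j + m) - (q:ℤ) * (p:ℤ) ^ n := by
        have := dvd_add hdvd hmr
        rwa [show j - ((q:ℤ) * (p:ℤ) ^ n - ((m % (p:ℤ) ^ (N + 1)).toNat : ℤ))
            + (m - ((m % (p:ℤ) ^ (N + 1)).toNat : ℤ))
            = (j + m) - (q:ℤ) * (p:ℤ) ^ n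
            from by ring] at this
      exact Psi_eq_some hp0 hq x (modEq_of_dvd_sub hfinal)
  -- the orbit of Ψ(x') avoids U
  have hBU : {y : ℤ → Option Bool | ∃ m : ℤ, y = fun j => Psi p q x' (j + m)} ⊆ Uᶜ := by
    rintro y ⟨m, rfl⟩ hyU
    rw [hUdef] at hyU
    simp only [Set.mem_iUnion, Set.mem_iInter, Finset.mem_range, Finset.mem_Ico,
      Set.mem_setOf_eq] at hyU
    obtain ⟨r, _, hall⟩ := hyU
    obtain ⟨n, hnN, j, h0, hlt, hdvd, hne⟩ :=
      core_lemma p q hp hq1 hq2 x x' N hxN m (r : ℤ)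
    exact hne (hall n (by omega) j ⟨h0, hlt⟩ hdvd)
  exact Set.disjoint_of_subset (closure_minimal hAU hclopen.isClosed)
    (closure_minimal hBU (isClosed_compl_iff.mpr hclopen.isOpen)) disjoint_compl_right
end
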